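/- arXiv:2404.11487 — 6 statements merged into one kernel-verified Lean document; each statement's English description precedes it below -/
import Mathlib

section
/- Let n ≥ 1 and let A ∈ ℝ^{n×n} be a symmetric positive-definite matrix with rows A_1, …, A_n. For each index i let B_i = A - (A_iᵀ A_i)/A_{ii} be the matrix obtained by one partial Cholesky pivot step at index i. Then the expected squared Frobenius norm under the sampling rule that selects pivot i with probability A_{ii}² / (Σ_{ℓ=1}^n A_{ℓℓ}²) satisfies Σ_{i=1}^n (A_{ii}² / Σ_{ℓ=1}^n A_{ℓℓ}²) ‖B_i‖_F² ≤ ‖A‖_F² - (1 / Σ_{ℓ=1}^n A_{ℓℓ}²) Σ_{i=1}^n ‖A_i‖_{ℓ²}⁴ ≤ (1 - 1/n) ‖A‖_F². -/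
/-!
Write `rᵢ = ‖Aᵢ‖²` and `qᵢ = Aᵢ A Aᵢᵀ = (A³)ᵢᵢ`. Expanding the square gives
`‖Bᵢ‖_F² = ‖A‖_F² - 2 qᵢ / Aᵢᵢ + rᵢ² / Aᵢᵢ²`, and Cauchy–Schwarz for the semi-inner product
`⟪x, y⟫ = x A yᵀ` applied to `eᵢ` and `Aᵢ` gives `rᵢ² ≤ Aᵢᵢ qᵢ`. Hence each pivot removes at
least `rᵢ² / Aᵢᵢ²` from `‖A‖_F²`, and the weights `Aᵢᵢ²` cancel that denominator on averaging.
The second bound is Cauchy–Schwarz `(∑ rᵢ)² ≤ n ∑ rᵢ²` together with `∑ Aᵢᵢ² ≤ ∑ rᵢ = ‖A‖_F²`.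
-/

open Matrix Finset

variable {ι : Type*} [Fintype ι]

lemma Matrix.PosSemidef.dotProduct_mulVec_sq_le {M : Matrix ι ι ℝ}
    (hM : M.PosSemidef) (x y : ι → ℝ) :
    (x ⬝ᵥ M *ᵥ y) ^ 2 ≤ (x ⬝ᵥ M *ᵥ x) * (y ⬝ᵥ M *ᵥ y) := by
  let := M.toSeminormedAddCommGroup hM
  let := M.toInnerProductSpace hM
  have hinner (u v : ι → ℝ) : inner ℝ u v = u ⬝ᵥ M *ᵥ v := by
    rw [dotProduct_comm]; rfl
  rw [sq, ← hinner, ← hinner, ← hinner]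
  exact real_inner_mul_inner_self_le x y

lemma Matrix.PosSemidef.sq_sum_row_sq_le [DecidableEq ι] {M : Matrix ι ι ℝ} (hM : M.PosSemidef)
    (i : ι) : (∑ k, M i k ^ 2) ^ 2 ≤ M i i * (M i ⬝ᵥ M *ᵥ M i) := by
  have h := hM.dotProduct_mulVec_sq_le (Pi.single i 1) (M i)
  rw [mulVec_single_one, single_one_dotProduct, single_one_dotProduct, col_apply] at h
  simpa only [mulVec_apply, dotProduct, Matrix.row_apply, sq] using h

lemma Matrix.sum_sum_sub_smul_vecMulVec_sq (M : Matrix ι ι ℝ) (c : ℝ) (u : ι → ℝ) :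
    ∑ j, ∑ k, (M - c • vecMulVec u u) j k ^ 2
      = ∑ j, ∑ k, M j k ^ 2 - 2 * c * (u ⬝ᵥ M *ᵥ u) + c ^ 2 * (∑ k, u k ^ 2) ^ 2 := by
  have hexpand (j k : ι) : (M - c • vecMulVec u u) j k ^ 2
      = M j k ^ 2 - 2 * c * (u j * (M j k * u k)) + c ^ 2 * (u j ^ 2 * u k ^ 2) := by
    simp only [Matrix.sub_apply, Matrix.smul_apply, vecMulVec_apply, smul_eq_mul]; ring
  simp only [hexpand, sum_add_distrib, sum_sub_distrib, ← mul_sum, sq (∑ k, u k ^ 2),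
    sum_mul_sum, dotProduct, mulVec]

lemma Matrix.PosSemidef.sum_sum_pivot_sq_le [DecidableEq ι] {M : Matrix ι ι ℝ}
    (hM : M.PosSemidef) {i : ι} (hi : 0 < M i i) :
    ∑ j, ∑ k, (M - (M i i)⁻¹ • vecMulVec (M i) (M i)) j k ^ 2
      ≤ ∑ j, ∑ k, M j k ^ 2 - (∑ k, M i k ^ 2) ^ 2 / M i i ^ 2 := by
  have hCS : (∑ k, M i k ^ 2) ^ 2 / M i i ^ 2 ≤ (M i i)⁻¹ * (M i ⬝ᵥ M *ᵥ M i) := by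
    rw [div_le_iff₀ (by positivity)]
    calc (∑ k, M i k ^ 2) ^ 2 ≤ M i i * (M i ⬝ᵥ M *ᵥ M i) := hM.sq_sum_row_sq_le i
      _ = (M i i)⁻¹ * (M i ⬝ᵥ M *ᵥ M i) * M i i ^ 2 := by field_simp
  rw [sum_sum_sub_smul_vecMulVec_sq, inv_pow, ← div_eq_inv_mul]
  linarith

lemma Matrix.PosSemidef.sum_pivot_weight_mul_sum_sum_sq_le [DecidableEq ι] [Nonempty ι]
    {A : Matrix ι ι ℝ} (hA : A.PosSemidef) (hdiag : ∀ i, 0 < A i i) :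
    ∑ i, (A i i ^ 2 / ∑ ℓ, A ℓ ℓ ^ 2) *
        ∑ j, ∑ k, (A - (A i i)⁻¹ • vecMulVec (A i) (A i)) j k ^ 2
      ≤ ∑ j, ∑ k, A j k ^ 2 - (1 / ∑ ℓ, A ℓ ℓ ^ 2) * ∑ i, (∑ k, A i k ^ 2) ^ 2 := by
  set S := ∑ ℓ, A ℓ ℓ ^ 2
  have hS : 0 < S := sum_pos (fun i _ => pow_pos (hdiag i) 2) univ_nonempty
  have hweight (i : ι) : A i i ^ 2 / S * (∑ j, ∑ k, A j k ^ 2 - (∑ k, A i k ^ 2) ^ 2 / A i i ^ 2)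
      = A i i ^ 2 / S * ∑ j, ∑ k, A j k ^ 2 - 1 / S * (∑ k, A i k ^ 2) ^ 2 := by
    field_simp [(hdiag i).ne']
  calc _ ≤ ∑ i, A i i ^ 2 / S * (∑ j, ∑ k, A j k ^ 2 - (∑ k, A i k ^ 2) ^ 2 / A i i ^ 2) :=
        sum_le_sum fun i _ =>
          mul_le_mul_of_nonneg_left (hA.sum_sum_pivot_sq_le (hdiag i)) (by positivity)
    _ = _ := by
        rw [sum_congr rfl fun i _ => hweight i, sum_sub_distrib, ← sum_mul, ← sum_div,
          div_self hS.ne', one_mul, mul_sum]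

lemma sum_sub_one_div_mul_sum_sq_le [Nonempty ι] (r : ι → ℝ) {S : ℝ} (hS : 0 < S)
    (hSr : S ≤ ∑ i, r i) :
    ∑ i, r i - (1 / S) * ∑ i, r i ^ 2 ≤ (1 - 1 / (Fintype.card ι : ℝ)) * ∑ i, r i := by
  have hcard : (0 : ℝ) < Fintype.card ι := by exact_mod_cast Fintype.card_pos
  have hCS : (∑ i, r i) ^ 2 ≤ Fintype.card ι * ∑ i, r i ^ 2 := sq_sum_le_card_mul_sum_sq
  have hscaled : 1 / (Fintype.card ι : ℝ) * ∑ i, r i ≤ 1 / S * ∑ i, r i ^ 2 := by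
    rw [one_div_mul_eq_div, one_div_mul_eq_div, div_le_div_iff₀ hcard hS]
    nlinarith
  linarith

/-- **Frobenius-norm contraction for randomly pivoted partial Cholesky with β = 2.**
If `A` is symmetric positive definite and the pivot `i` is chosen with probability
`A i i ^ 2 / ∑ ℓ, A ℓ ℓ ^ 2`, then the expected squared Frobenius norm of the residual
`B i = A - (A_iᵀ A_i) / A i i` satisfies the stated two inequalities. -/
theorem frobenius_contraction_beta_two (n : ℕ) (hn : 1 ≤ n)
    (A : Matrix (Fin n) (Fin n) ℝ) (hA : A.PosDef)
    (B : Fin n → Matrix (Fin n) (Fin n) ℝ)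
    (hB : ∀ i, B i = A - (A i i)⁻¹ • Matrix.vecMulVec (A i) (A i)) :
    (∑ i, ((A i i) ^ 2 / ∑ ℓ, (A ℓ ℓ) ^ 2) * (∑ j, ∑ k, (B i j k) ^ 2)
        ≤ (∑ j, ∑ k, (A j k) ^ 2)
          - (1 / ∑ ℓ, (A ℓ ℓ) ^ 2) * ∑ i, (∑ k, (A i k) ^ 2) ^ 2) ∧
    ((∑ j, ∑ k, (A j k) ^ 2) - (1 / ∑ ℓ, (A ℓ ℓ) ^ 2) * ∑ i, (∑ k, (A i k) ^ 2) ^ 2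
        ≤ (1 - 1 / (n : ℝ)) * ∑ j, ∑ k, (A j k) ^ 2) := by
  have : Nonempty (Fin n) := ⟨⟨0, hn⟩⟩
  have hdiag (i : Fin n) : 0 < A i i := hA.diag_pos
  have hdiag_le : ∑ ℓ, A ℓ ℓ ^ 2 ≤ ∑ j, ∑ k, A j k ^ 2 :=
    sum_le_sum fun j _ => single_le_sum (f := fun k => A j k ^ 2) (fun _ _ => sq_nonneg _)
      (mem_univ j)
  obtain rfl : B = _ := funext hB
  refine ⟨hA.posSemidef.sum_pivot_weight_mul_sum_sum_sq_le hdiag, ?_⟩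
  simpa using sum_sub_one_div_mul_sum_sq_le (fun j => ∑ k, A j k ^ 2)
    (sum_pos (fun i _ => pow_pos (hdiag i) 2) univ_nonempty) hdiag_le
end

section
/- Let n ≥ 1 and let A ∈ ℝ^{n×n} be a symmetric positive-definite matrix with rows A_1, …, A_n. For each index i let B_i = A - (A_iᵀ A_i)/A_{ii}. Then Σ_{i=1}^n (A_{ii}² / Σ_{ℓ=1}^n A_{ℓℓ}²) ‖B_i‖_F² ≤ ‖A‖_F² - (1 / Σ_{ℓ=1}^n A_{ℓℓ}²) Σ_{i=1}^n A_{ii} · (A³)_{ii}, where (A³)_{ii} denotes the i-th diagonal entry of the matrix cube A³. -/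
/-!
Writing `a = A i i`, `v = A i` and `F = ∑ j, ∑ k, A j k ^ 2`, expanding the square gives
`‖A - a⁻¹ vvᵀ‖_F² = F - 2 a⁻¹ vᵀAv + a⁻² (vᵀv)²`, where `vᵀAv = (A³) i i` by symmetry.
Cauchy–Schwarz for the semi-inner product `⟨x, y⟩ = xᵀAy`, applied to `e_i` and `v`, gives
`(vᵀv)² ≤ a · vᵀAv`, so `a² ‖B i‖_F² ≤ a² F - a (A³) i i`. Summing over `i` and dividing by
`∑ ℓ, A ℓ ℓ ^ 2` gives the bound.
-/

open Matrix

theorem Matrix.sum_sq_sub_smul_vecMulVec_self {m R : Type*} [Fintype m] [CommRing R]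
    (M : Matrix m m R) (t : R) (v : m → R) :
    ∑ j, ∑ k, ((M - t • vecMulVec v v) j k) ^ 2
      = ∑ j, ∑ k, M j k ^ 2 - 2 * t * (v ⬝ᵥ M *ᵥ v) + t ^ 2 * (v ⬝ᵥ v) ^ 2 := by
  have hquad : v ⬝ᵥ M *ᵥ v = ∑ j, ∑ k, v j * M j k * v k := by
    simp only [dotProduct, mulVec, Finset.mul_sum, mul_assoc]
  have hnorm : (v ⬝ᵥ v) ^ 2 = ∑ j, ∑ k, v j ^ 2 * v k ^ 2 := by
    simp only [dotProduct, sq, Finset.sum_mul_sum]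
  calc ∑ j, ∑ k, ((M - t • vecMulVec v v) j k) ^ 2
      = ∑ j, ∑ k, (M j k ^ 2 - 2 * t * (v j * M j k * v k) + t ^ 2 * (v j ^ 2 * v k ^ 2)) := by
        simp only [Matrix.sub_apply, Matrix.smul_apply, vecMulVec_apply, smul_eq_mul]
        exact Finset.sum_congr rfl fun j _ => Finset.sum_congr rfl fun k _ => by ring
    _ = _ := by
        simp only [hquad, hnorm, Finset.sum_add_distrib, Finset.sum_sub_distrib, Finset.mul_sum]

theorem Matrix.IsSymm.pow_three_apply_self {n R : Type*} [Fintype n] [DecidableEq n]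
    [CommSemiring R] {A : Matrix n n R} (hA : A.IsSymm) (i : n) :
    (A ^ 3) i i = A i ⬝ᵥ A *ᵥ A i := by
  rw [pow_three, mul_apply, dotProduct]
  refine Finset.sum_congr rfl fun j _ => ?_
  rw [mul_apply, mulVec, dotProduct]
  exact congrArg _ (Finset.sum_congr rfl fun k _ => by rw [hA.apply k i])

section PosSemidef

variable {n : Type*} [Fintype n] {A : Matrix n n ℝ}

theorem Matrix.PosSemidef.dotProduct_mulVec_sq_le_s1 (hA : A.PosSemidef) (x y : n → ℝ) :
    (x ⬝ᵥ A *ᵥ y) ^ 2 ≤ (x ⬝ᵥ A *ᵥ x) * (y ⬝ᵥ A *ᵥ y) := by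
  let := A.toSeminormedAddCommGroup hA
  let := A.toInnerProductSpace hA
  have h := real_inner_mul_inner_self_le x y
  change (A *ᵥ y) ⬝ᵥ star x * ((A *ᵥ y) ⬝ᵥ star x)
    ≤ (A *ᵥ x) ⬝ᵥ star x * ((A *ᵥ y) ⬝ᵥ star y) at h
  simpa [sq, dotProduct_comm] using h

variable [DecidableEq n]

theorem Matrix.PosSemidef.sq_row_dotProduct_le (hA : A.PosSemidef) (i : n) :
    (A i ⬝ᵥ A i) ^ 2 ≤ A i i * (A i ⬝ᵥ A *ᵥ A i) := by
  have h := hA.dotProduct_mulVec_sq_le_s1 (Pi.single i 1) (A i)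
  rw [single_one_dotProduct, single_one_dotProduct, mulVec_single_one, col_apply] at h
  exact h

theorem Matrix.PosSemidef.sq_diag_mul_sum_sq_sub_vecMulVec_row_le (hA : A.PosSemidef) (i : n) :
    A i i ^ 2 * ∑ j, ∑ k, ((A - (A i i)⁻¹ • vecMulVec (A i) (A i)) j k) ^ 2
      ≤ A i i ^ 2 * ∑ j, ∑ k, A j k ^ 2 - A i i * (A i ⬝ᵥ A *ᵥ A i) := by
  rw [sum_sq_sub_smul_vecMulVec_self]
  rcases eq_or_ne (A i i) 0 with hzero | hne
  · simp [hzero]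
  · have hexpand : A i i ^ 2 * (∑ j, ∑ k, A j k ^ 2 - 2 * (A i i)⁻¹ * (A i ⬝ᵥ A *ᵥ A i)
          + (A i i)⁻¹ ^ 2 * (A i ⬝ᵥ A i) ^ 2)
        = A i i ^ 2 * ∑ j, ∑ k, A j k ^ 2 - 2 * A i i * (A i ⬝ᵥ A *ᵥ A i)
          + (A i ⬝ᵥ A i) ^ 2 := by
      field_simp
    linarith [hA.sq_row_dotProduct_le i]

end PosSemidef

theorem frobenius_contraction_cube_bound_general (n : ℕ)
    (A : Matrix (Fin n) (Fin n) ℝ) (hA : A.PosDef)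
    (B : Fin n → Matrix (Fin n) (Fin n) ℝ)
    (hB : ∀ i, B i = A - (A i i)⁻¹ • Matrix.vecMulVec (A i) (A i)) :
    ∑ i, ((A i i) ^ 2 / ∑ ℓ, (A ℓ ℓ) ^ 2) * (∑ j, ∑ k, (B i j k) ^ 2)
      ≤ (∑ j, ∑ k, (A j k) ^ 2)
        - (1 / ∑ ℓ, (A ℓ ℓ) ^ 2) * ∑ i, A i i * ((A ^ 3) i i) := by
  have hsymm : A.IsSymm := isHermitian_iff_isSymm.mp hA.isHermitian
  set S := ∑ ℓ, A ℓ ℓ ^ 2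
  set F := ∑ j, ∑ k, A j k ^ 2
  calc ∑ i, (A i i ^ 2 / S) * ∑ j, ∑ k, B i j k ^ 2
      = S⁻¹ * ∑ i, A i i ^ 2 * ∑ j, ∑ k, B i j k ^ 2 := by
        rw [Finset.mul_sum]
        exact Finset.sum_congr rfl fun i _ => by ring
    _ ≤ S⁻¹ * ∑ i, (A i i ^ 2 * F - A i i * (A ^ 3) i i) := by
        gcongr with i
        rw [hB i, hsymm.pow_three_apply_self]
        exact hA.posSemidef.sq_diag_mul_sum_sq_sub_vecMulVec_row_le i
    _ = S⁻¹ * S * F - (1 / S) * ∑ i, A i i * (A ^ 3) i i := by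
        rw [Finset.sum_sub_distrib, ← Finset.sum_mul]
        ring
    _ ≤ F - (1 / S) * ∑ i, A i i * (A ^ 3) i i := by
        gcongr
        exact mul_le_of_le_one_left (by positivity) inv_mul_le_one

/-- **Stronger intermediate Frobenius-norm contraction.**
For symmetric positive definite `A`, sampling pivot `i` with probability proportional to
`A i i ^ 2`, the expected squared Frobenius norm of `B i = A - (A_iᵀ A_i)/A i i`
is at most `‖A‖_F² - (∑ i, A i i * (A³) i i) / (∑ ℓ, A ℓ ℓ ^ 2)`. -/
theorem frobenius_contraction_cube_bound (n : ℕ) (hn : 1 ≤ n)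
    (A : Matrix (Fin n) (Fin n) ℝ) (hA : A.PosDef)
    (B : Fin n → Matrix (Fin n) (Fin n) ℝ)
    (hB : ∀ i, B i = A - (A i i)⁻¹ • Matrix.vecMulVec (A i) (A i)) :
    ∑ i, ((A i i) ^ 2 / ∑ ℓ, (A ℓ ℓ) ^ 2) * (∑ j, ∑ k, (B i j k) ^ 2)
      ≤ (∑ j, ∑ k, (A j k) ^ 2)
        - (1 / ∑ ℓ, (A ℓ ℓ) ^ 2) * ∑ i, A i i * ((A ^ 3) i i) :=
  frobenius_contraction_cube_bound_general n A hA B hB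
end

section
/- Let A ∈ ℝ^{n×n} be symmetric and positive semi-definite with rows A_1, …, A_n, and let i be an index with A_{ii} ≠ 0. If B = A - (A_iᵀ A_i)/A_{ii}, then ‖B‖_F² ≤ ‖A‖_F² - ‖A_i‖_{ℓ²}⁴ / A_{ii}². -/
/-!
Write `a = A_i` and `d = A_ii`. Expanding the square, `‖B‖_F² = ‖A‖_F² - 2 aᵀAa / d + ‖a‖⁴ / d²`,
so it suffices that `‖a‖⁴ ≤ d · aᵀAa`. This is Cauchy–Schwarz for the positive semidefinite form
`(x, y) ↦ xᵀAy` applied to `x = e_i` and `y = a`, since `e_iᵀAa = ‖a‖²` and `e_iᵀAe_i = d`.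
-/

namespace Matrix

variable {n R : Type*} [Fintype n]

theorem sum_sum_sub_smul_vecMulVec_self_sq [CommRing R] (A : Matrix n n R) (c : R) (v : n → R) :
    ∑ j, ∑ k, (A - c • vecMulVec v v) j k ^ 2
      = ∑ j, ∑ k, A j k ^ 2 - 2 * c * (v ⬝ᵥ A *ᵥ v) + c ^ 2 * (v ⬝ᵥ v) ^ 2 := by
  have hquad : v ⬝ᵥ A *ᵥ v = ∑ j, ∑ k, v j * A j k * v k := by
    simp only [dotProduct, mulVec, Finset.mul_sum, mul_assoc]
  have hnorm : (v ⬝ᵥ v) ^ 2 = ∑ j, ∑ k, (v j * v k) ^ 2 := by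
    simp only [dotProduct, sq, Finset.sum_mul_sum, mul_mul_mul_comm]
  simp only [hquad, hnorm, Finset.mul_sum, ← Finset.sum_sub_distrib, ← Finset.sum_add_distrib,
    sub_apply, smul_apply, vecMulVec_apply, smul_eq_mul]
  exact Finset.sum_congr rfl fun j _ => Finset.sum_congr rfl fun k _ => by ring

theorem PosSemidef.dotProduct_mulVec_sq_le_s4 {A : Matrix n n ℝ} (hA : A.PosSemidef)
    (x y : n → ℝ) : (x ⬝ᵥ A *ᵥ y) ^ 2 ≤ (x ⬝ᵥ A *ᵥ x) * (y ⬝ᵥ A *ᵥ y) := by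
  classical
  have hsymm : LinearMap.IsSymm (toBilin' A) :=
    LinearMap.BilinForm.isSymm_iff.1 (isSymm_toBilin'_iff_isSymm.2 hA.isHermitian)
  simpa only [toBilin'_apply'] using (toBilin' A).apply_sq_le_of_symm
    (fun z => by simpa [toBilin'_apply'] using hA.dotProduct_mulVec_nonneg z) hsymm x y

theorem PosSemidef.row_dotProduct_row_sq_le {A : Matrix n n ℝ} (hA : A.PosSemidef) (i : n) :
    (A i ⬝ᵥ A i) ^ 2 ≤ A i i * (A i ⬝ᵥ A *ᵥ A i) := by
  classical
  have hrow : Pi.single i 1 ⬝ᵥ A *ᵥ A i = A i ⬝ᵥ A i := by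
    rw [single_one_dotProduct, mulVec, dotProduct]
  have hdiag : Pi.single i 1 ⬝ᵥ A *ᵥ Pi.single i 1 = A i i := by
    simp only [single_one_dotProduct, mulVec_single_one, col_apply]
  simpa only [hrow, hdiag] using hA.dotProduct_mulVec_sq_le_s4 (Pi.single i 1) (A i)

end Matrix

/-- **Corollary 1, first inequality.** Removing the `i`-th row/column of a symmetric
positive semi-definite matrix `A` decreases the squared Frobenius norm by at least
`‖A_i‖_{ℓ²}⁴ / A i i ^ 2`. -/
theorem frobenius_decrease_after_pivot (n : ℕ)
    (A : Matrix (Fin n) (Fin n) ℝ) (hA : A.PosSemidef) (i : Fin n) (hi : A i i ≠ 0)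
    (B : Matrix (Fin n) (Fin n) ℝ)
    (hB : B = A - (A i i)⁻¹ • Matrix.vecMulVec (A i) (A i)) :
    ∑ j, ∑ k, (B j k) ^ 2
      ≤ (∑ j, ∑ k, (A j k) ^ 2) - (∑ k, (A i k) ^ 2) ^ 2 / (A i i) ^ 2 := by
  have hpos : 0 < A i i := hA.diag_nonneg.lt_of_ne' hi
  have hcs := hA.row_dotProduct_row_sq_le i
  have hrow : ∑ k, A i k ^ 2 = A i ⬝ᵥ A i := by simp only [dotProduct, sq]
  rw [hB, Matrix.sum_sum_sub_smul_vecMulVec_self_sq, hrow]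
  set d := A i i
  set S := A i ⬝ᵥ A i
  set Q := A i ⬝ᵥ A.mulVec (A i)
  have key : S ^ 2 / d ^ 2 ≤ Q / d := by
    rw [div_le_div_iff₀ (by positivity) hpos]
    nlinarith
  rw [inv_pow, ← div_eq_inv_mul, mul_assoc, ← div_eq_inv_mul]
  linarith
end

section
/- Let n ≥ 1 and let A ∈ ℝ^{n×n} be a nonzero symmetric positive semi-definite matrix with rows A_1, …, A_n. Let i be an index with A_{ii} ≠ 0 that maximizes the quantity ‖A_j‖_{ℓ²}² / A_{jj} over all indices j with A_{jj} ≠ 0. Then the matrix B = A - (A_iᵀ A_i)/A_{ii} satisfies ‖B‖_F² ≤ (1 - 1/n) ‖A‖_F². -/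
/-!
Write `d = A i i`, `a = A i` and `r = ‖a‖² / d`. Expanding the square,
`‖B‖_F² = ‖A‖_F² - 2 aᵀAa / d + ‖a‖⁴ / d²`, and Cauchy–Schwarz for the form of `A` applied to
`eᵢ` and `a` gives `‖a‖⁴ ≤ d · aᵀAa`, so `‖B‖_F² ≤ ‖A‖_F² - r²`. By the choice of `i` (rows with
zero diagonal entry vanish) `‖A‖_F² ≤ r · tr A`, and `(tr A)² ≤ n ‖A‖_F²`; together
`‖A‖_F² ≤ n r²`.
-/

open Matrix Finset

namespace Matrix

variable {ι : Type*} [Fintype ι]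

lemma sum_sum_sq_sub_smul_vecMulVec {R : Type*} [CommRing R] (M : Matrix ι ι R) (v : ι → R)
    (c : R) :
    ∑ j, ∑ k, (M - c • vecMulVec v v) j k ^ 2 =
      ∑ j, ∑ k, M j k ^ 2 - 2 * c * (v ⬝ᵥ M *ᵥ v) + c ^ 2 * (∑ k, v k ^ 2) ^ 2 := by
  have h (j k : ι) : (M - c • vecMulVec v v) j k ^ 2 =
      M j k ^ 2 - 2 * c * (v j * (M j k * v k)) + c ^ 2 * (v j ^ 2 * v k ^ 2) := by
    simp only [sub_apply, smul_apply, vecMulVec_apply, smul_eq_mul]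
    ring
  simp only [h, sum_add_distrib, sum_sub_distrib, ← mul_sum, dotProduct, mulVec,
    sq (∑ k, v k ^ 2), sum_mul]

lemma trace_sq_le_card_mul_sum_sum_sq (M : Matrix ι ι ℝ) :
    M.trace ^ 2 ≤ Fintype.card ι * ∑ j, ∑ k, M j k ^ 2 :=
  calc M.trace ^ 2 ≤ Fintype.card ι * ∑ j, M j j ^ 2 := sq_sum_le_card_mul_sum_sq
    _ ≤ Fintype.card ι * ∑ j, ∑ k, M j k ^ 2 := by
      gcongr with j
      exact single_le_sum (f := fun k => M j k ^ 2) (fun k _ => sq_nonneg _) (mem_univ j)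

namespace PosSemidef

variable {A : Matrix ι ι ℝ}

lemma dotProduct_mulVec_sq_le_s6 (hA : A.PosSemidef) (x y : ι → ℝ) :
    (x ⬝ᵥ A *ᵥ y) ^ 2 ≤ (x ⬝ᵥ A *ᵥ x) * (y ⬝ᵥ A *ᵥ y) := by
  classical
  have hsymm : y ⬝ᵥ A *ᵥ x = x ⬝ᵥ A *ᵥ y := by
    rw [dotProduct_mulVec, ← mulVec_transpose, dotProduct_comm,
      ← conjTranspose_eq_transpose_of_trivial, hA.1.eq]
  have h := LinearMap.BilinForm.apply_mul_apply_le_of_forall_zero_le (toLinearMap₂' ℝ A)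
    (fun x => by simpa [toLinearMap₂'_apply'] using hA.dotProduct_mulVec_nonneg x) x y
  simp only [toLinearMap₂'_apply'] at h
  rwa [hsymm, ← sq] at h

lemma sq_apply_le_mul_diag (hA : A.PosSemidef) (j k : ι) : A j k ^ 2 ≤ A j j * A k k := by
  classical
  simpa [single_one_dotProduct, mulVec_single_one] using
    hA.dotProduct_mulVec_sq_le_s6 (Pi.single j 1) (Pi.single k 1)

lemma apply_eq_zero_of_diag_eq_zero (hA : A.PosSemidef) {j : ι} (hj : A j j = 0) (k : ι) :
    A j k = 0 :=
  pow_eq_zero_iff two_ne_zero |>.1 <| le_antisymm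
    (by simpa [hj] using hA.sq_apply_le_mul_diag j k) (sq_nonneg _)

lemma sq_sum_sq_row_le (hA : A.PosSemidef) (i : ι) :
    (∑ k, A i k ^ 2) ^ 2 ≤ A i i * (A i ⬝ᵥ A *ᵥ A i) := by
  classical
  have h := hA.dotProduct_mulVec_sq_le_s6 (Pi.single i 1) (A i)
  have hrow : (A *ᵥ A i) i = ∑ k, A i k ^ 2 := by simp only [mulVec, dotProduct, sq]
  rwa [single_one_dotProduct, single_one_dotProduct, mulVec_single_one, col_apply, hrow] at h

lemma sum_sum_sq_sub_pivot_le (hA : A.PosSemidef) {i : ι} (hi : A i i ≠ 0) :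
    ∑ j, ∑ k, (A - (A i i)⁻¹ • vecMulVec (A i) (A i)) j k ^ 2 ≤
      ∑ j, ∑ k, A j k ^ 2 - ((∑ k, A i k ^ 2) / A i i) ^ 2 := by
  have hd : 0 < A i i := hA.diag_nonneg.lt_of_ne' hi
  have hcs : (A i i)⁻¹ ^ 2 * (∑ k, A i k ^ 2) ^ 2 ≤ (A i i)⁻¹ * (A i ⬝ᵥ A *ᵥ A i) :=
    calc (A i i)⁻¹ ^ 2 * (∑ k, A i k ^ 2) ^ 2
        ≤ (A i i)⁻¹ ^ 2 * (A i i * (A i ⬝ᵥ A *ᵥ A i)) := by gcongr; exact hA.sq_sum_sq_row_le i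
      _ = (A i i)⁻¹ * (A i ⬝ᵥ A *ᵥ A i) := by field_simp
  rw [sum_sum_sq_sub_smul_vecMulVec, div_pow, div_eq_inv_mul, ← inv_pow]
  linarith

lemma sum_sum_sq_le_mul_trace (hA : A.PosSemidef) {r : ℝ}
    (hr : ∀ j, A j j ≠ 0 → (∑ k, A j k ^ 2) / A j j ≤ r) :
    ∑ j, ∑ k, A j k ^ 2 ≤ r * A.trace := by
  rw [trace, mul_sum]
  refine sum_le_sum fun j _ => ?_
  by_cases hj : A j j = 0
  · simp [hA.apply_eq_zero_of_diag_eq_zero hj]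
  · exact (div_le_iff₀ (hA.diag_nonneg.lt_of_ne' hj)).1 (hr j hj)

end PosSemidef
end Matrix

theorem frobenius_contraction_greedy_ratio_general (n : ℕ)
    (A : Matrix (Fin n) (Fin n) ℝ) (hA : A.PosSemidef)
    (i : Fin n) (hi : A i i ≠ 0)
    (hmax : ∀ j, A j j ≠ 0 → (∑ k, (A j k) ^ 2) / A j j ≤ (∑ k, (A i k) ^ 2) / A i i)
    (B : Matrix (Fin n) (Fin n) ℝ)
    (hB : B = A - (A i i)⁻¹ • Matrix.vecMulVec (A i) (A i)) :
    ∑ j, ∑ k, (B j k) ^ 2 ≤ (1 - 1 / (n : ℝ)) * ∑ j, ∑ k, (A j k) ^ 2 := by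
  subst hB
  set S := ∑ j, ∑ k, A j k ^ 2
  set r := (∑ k, A i k ^ 2) / A i i
  have hn : (0 : ℝ) < n := by exact_mod_cast i.pos
  have hS : S ≤ r * A.trace := hA.sum_sum_sq_le_mul_trace hmax
  have htrace : A.trace ^ 2 ≤ n * S := by simpa using A.trace_sq_le_card_mul_sum_sum_sq
  have hS0 : 0 ≤ S := sum_nonneg fun j _ => sum_nonneg fun k _ => sq_nonneg _
  have hSr : S ≤ n * r ^ 2 := by
    have hsq : S * S ≤ S * (n * r ^ 2) :=
      calc S * S ≤ (r * A.trace) ^ 2 := by rw [sq]; exact mul_self_le_mul_self hS0 hS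
        _ ≤ r ^ 2 * (n * S) := by rw [mul_pow]; gcongr
        _ = S * (n * r ^ 2) := by ring
    rcases hS0.eq_or_lt with hzero | hpos
    · rw [← hzero]; positivity
    · exact le_of_mul_le_mul_left hsq hpos
  calc _ ≤ S - r ^ 2 := hA.sum_sum_sq_sub_pivot_le hi
    _ ≤ (1 - 1 / (n : ℝ)) * S := by
      rw [one_sub_mul, one_div_mul_eq_div, sub_le_sub_iff_left, div_le_iff₀' hn]
      exact hSr

/-- **Corollary 2.** If the pivot `i` maximizes `‖A_j‖_{ℓ²}² / A j j` over all indices `j`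
with nonzero diagonal entry, then one pivot step contracts the squared Frobenius norm
by the factor `1 - 1/n`. -/
theorem frobenius_contraction_greedy_ratio (n : ℕ) (hn : 1 ≤ n)
    (A : Matrix (Fin n) (Fin n) ℝ) (hA : A.PosSemidef) (hA0 : A ≠ 0)
    (i : Fin n) (hi : A i i ≠ 0)
    (hmax : ∀ j, A j j ≠ 0 → (∑ k, (A j k) ^ 2) / A j j ≤ (∑ k, (A i k) ^ 2) / A i i)
    (B : Matrix (Fin n) (Fin n) ℝ)
    (hB : B = A - (A i i)⁻¹ • Matrix.vecMulVec (A i) (A i)) :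
    ∑ j, ∑ k, (B j k) ^ 2 ≤ (1 - 1 / (n : ℝ)) * ∑ j, ∑ k, (A j k) ^ 2 :=
  frobenius_contraction_greedy_ratio_general n A hA i hi hmax B hB
end

section
/- Let n ≥ 1 and let A ∈ ℝ^{n×n} be a nonzero symmetric positive semi-definite matrix with rows A_1, …, A_n. Then there exists an index i with A_{ii} ≠ 0 such that ‖A_i‖_{ℓ²}⁴ / A_{ii}² ≥ ‖A‖_F² / n. -/
/-!
Pick a row whose squared norm `r = ‖A_i‖²` is at least the average `‖A‖_F² / n`. Then `r > 0`,
and since a zero diagonal entry of a positive semi-definite matrix kills its whole row,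
`A_ii ≠ 0`. Finally `A_ii² ≤ r` gives `r ≤ r² / A_ii²`.
-/

open Finset Matrix
open scoped ComplexOrder

theorem Matrix.PosSemidef.apply_eq_zero_of_diag_eq_zero_s7 {ι 𝕜 : Type*} [Fintype ι] [RCLike 𝕜]
    {A : Matrix ι ι 𝕜} (hA : A.PosSemidef) {i : ι} (hi : A i i = 0) (k : ι) : A i k = 0 := by
  classical
  have hcol : A *ᵥ Pi.single i 1 = 0 :=
    (hA.dotProduct_mulVec_zero_iff _).mp (by simpa [mulVec_single_one] using hi)
  have hki : A k i = 0 := by simpa [mulVec_single_one] using congrFun hcol k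
  simpa [hki] using (hA.isHermitian.apply i k).symm

theorem Finset.exists_sum_div_card_le {ι : Type*} {s : Finset ι} (hs : s.Nonempty) (f : ι → ℝ) :
    ∃ i ∈ s, (∑ j ∈ s, f j) / #s ≤ f i :=
  exists_le_of_sum_le hs (by
    rw [sum_const, nsmul_eq_mul, mul_div_cancel₀ _ (by exact_mod_cast hs.card_ne_zero)])

theorem Matrix.sum_sum_sq_pos_of_ne_zero {ι : Type*} [Fintype ι] {A : Matrix ι ι ℝ}
    (hA : A ≠ 0) : 0 < ∑ j, ∑ k, A j k ^ 2 := by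
  obtain ⟨j, k, hjk⟩ : ∃ j k, A j k ≠ 0 := by
    by_contra! h
    exact hA (Matrix.ext h)
  exact sum_pos' (fun _ _ => sum_nonneg fun _ _ => sq_nonneg _)
    ⟨j, mem_univ j, sum_pos' (fun _ _ => sq_nonneg _) ⟨k, mem_univ k, by positivity⟩⟩

theorem le_sq_div_sq_of_sq_le {r d : ℝ} (hr : 0 ≤ r) (hd : d ≠ 0) (h : d ^ 2 ≤ r) :
    r ≤ r ^ 2 / d ^ 2 := by
  rw [le_div_iff₀ (by positivity), sq r]
  exact mul_le_mul_of_nonneg_left h hr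

theorem exists_good_pivot_general (n : ℕ)
    (A : Matrix (Fin n) (Fin n) ℝ) (hA : A.PosSemidef) (hA0 : A ≠ 0) :
    ∃ i, A i i ≠ 0 ∧
      (∑ j, ∑ k, (A j k) ^ 2) / (n : ℝ) ≤ (∑ k, (A i k) ^ 2) ^ 2 / (A i i) ^ 2 := by
  have hF := sum_sum_sq_pos_of_ne_zero hA0
  have hne : (univ : Finset (Fin n)).Nonempty := nonempty_of_sum_ne_zero hF.ne'
  obtain ⟨i, -, hi⟩ := exists_sum_div_card_le hne fun j => ∑ k, A j k ^ 2
  have hrow : 0 < ∑ k, A i k ^ 2 := (div_pos hF (by exact_mod_cast hne.card_pos)).trans_le hi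
  rw [card_univ, Fintype.card_fin] at hi
  have hii : A i i ≠ 0 := fun h0 => by
    simp [hA.apply_eq_zero_of_diag_eq_zero_s7 h0] at hrow
  have hdiag : A i i ^ 2 ≤ ∑ k, A i k ^ 2 :=
    single_le_sum (fun k _ => sq_nonneg (A i k)) (mem_univ i)
  exact ⟨i, hii, hi.trans (le_sq_div_sq_of_sq_le hrow.le hii hdiag)⟩

/-- For a nonzero symmetric positive semi-definite matrix `A`, there is an index `i`
with `A i i ≠ 0` such that `‖A_i‖_{ℓ²}⁴ / A i i ^ 2 ≥ ‖A‖_F² / n`. -/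
theorem exists_good_pivot (n : ℕ) (hn : 1 ≤ n)
    (A : Matrix (Fin n) (Fin n) ℝ) (hA : A.PosSemidef) (hA0 : A ≠ 0) :
    ∃ i, A i i ≠ 0 ∧
      (∑ j, ∑ k, (A j k) ^ 2) / (n : ℝ) ≤ (∑ k, (A i k) ^ 2) ^ 2 / (A i i) ^ 2 :=
  exists_good_pivot_general n A hA hA0
end

section
/- Let n ≥ 1 and let A ∈ ℝ^{n×n} be a symmetric positive-definite matrix with rows A_1, …, A_n, and for each index i let B_i = A - (A_iᵀ A_i)/A_{ii}. Then the expected trace under adaptive random pivoting satisfies Σ_{i=1}^n (A_{ii}/tr(A)) · tr(B_i) = (1 - tr(A²)/tr(A)²) · tr(A), and this quantity is at most (1 - 1/n) · tr(A). -/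
/-!
Pivoting on `i` subtracts the rank-one matrix `A_iᵀ A_i / A_ii`, whose trace is `(A²)_ii / A_ii`
by symmetry. Weighted by `A_ii / tr A`, these traces sum to `tr A - tr(A²) / tr A`. The bound is
Cauchy–Schwarz: `(tr A)² ≤ n ∑ A_ii² ≤ n ∑_{i,j} A_ij² = n tr(A²)`.
-/

namespace Matrix

variable {ι K : Type*} [Fintype ι]

theorem IsSymm.sq_apply_self [DecidableEq ι] [CommSemiring K] {A : Matrix ι ι K} (hA : A.IsSymm)
    (i : ι) : (A ^ 2) i i = A i ⬝ᵥ A i := by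
  rw [sq, mul_apply']
  congr 1
  funext j
  exact hA.apply i j

def pivotResidual [Field K] (A : Matrix ι ι K) (i : ι) : Matrix ι ι K :=
  A - (A i i)⁻¹ • vecMulVec (A i) (A i)

theorem IsSymm.trace_pivotResidual [DecidableEq ι] [Field K] {A : Matrix ι ι K} (hA : A.IsSymm)
    (i : ι) : (A.pivotResidual i).trace = A.trace - (A ^ 2) i i / A i i := by
  rw [pivotResidual, trace_sub, trace_smul, trace_vecMulVec, hA.sq_apply_self, smul_eq_mul,
    inv_mul_eq_div]

theorem IsSymm.sum_diag_mul_trace_pivotResidual [DecidableEq ι] [Field K] {A : Matrix ι ι K}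
    (hA : A.IsSymm) (hdiag : ∀ i, A i i ≠ 0) :
    ∑ i, (A i i / A.trace) * (A.pivotResidual i).trace
      = (1 - (A ^ 2).trace / A.trace ^ 2) * A.trace := by
  rcases eq_or_ne A.trace 0 with htr | htr
  · simp [htr]
  have hterm : ∀ i, (A i i / A.trace) * (A.pivotResidual i).trace
      = A i i - (A ^ 2) i i / A.trace := by
    intro i
    rw [hA.trace_pivotResidual]
    field_simp [hdiag i]
  simp_rw [hterm]
  rw [Finset.sum_sub_distrib, ← Finset.sum_div]
  change A.trace - (A ^ 2).trace / A.trace = _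
  field_simp

theorem trace_sq_le_card_mul_trace_mul_transpose [CommRing K] [LinearOrder K]
    [IsStrictOrderedRing K] (A : Matrix ι ι K) :
    A.trace ^ 2 ≤ Fintype.card ι * (A * Aᵀ).trace :=
  calc A.trace ^ 2 ≤ Fintype.card ι * ∑ i, A i i ^ 2 := sq_sum_le_card_mul_sum_sq
    _ ≤ Fintype.card ι * ∑ i, ∑ j, A i j ^ 2 := by
      gcongr with i
      exact Finset.single_le_sum (fun j _ => sq_nonneg (A i j)) (Finset.mem_univ i)
    _ = Fintype.card ι * (A * Aᵀ).trace := by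
      simp [trace, mul_apply, sq]

theorem IsSymm.one_sub_div_mul_trace_le [DecidableEq ι] [Field K] [LinearOrder K]
    [IsStrictOrderedRing K] {A : Matrix ι ι K} (hA : A.IsSymm) (htr : 0 ≤ A.trace) :
    (1 - (A ^ 2).trace / A.trace ^ 2) * A.trace ≤ (1 - 1 / (Fintype.card ι : K)) * A.trace := by
  have hCS := A.trace_sq_le_card_mul_trace_mul_transpose
  rw [hA.eq, ← sq] at hCS
  rcases htr.eq_or_lt with htr | htr
  · simp [← htr]
  have hcard : (0 : K) < Fintype.card ι := by
    refine (Nat.cast_nonneg _).lt_of_ne fun hzero => ?_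
    rw [← hzero, zero_mul] at hCS
    exact (pow_pos htr 2).not_ge hCS
  rw [mul_le_mul_iff_of_pos_right htr, sub_le_sub_iff_left, div_le_div_iff₀ hcard (by positivity)]
  linarith

end Matrix

theorem expected_trace_adaptive_pivoting_general (n : ℕ)
    (A : Matrix (Fin n) (Fin n) ℝ) (hA : A.PosDef)
    (B : Fin n → Matrix (Fin n) (Fin n) ℝ)
    (hB : ∀ i, B i = A - (A i i)⁻¹ • Matrix.vecMulVec (A i) (A i)) :
    (∑ i, (A i i / A.trace) * (B i).trace
        = (1 - (A ^ 2).trace / A.trace ^ 2) * A.trace) ∧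
    (1 - (A ^ 2).trace / A.trace ^ 2) * A.trace ≤ (1 - 1 / (n : ℝ)) * A.trace := by
  have hsymm : A.IsSymm := Matrix.isHermitian_iff_isSymm.mp hA.isHermitian
  obtain rfl : B = A.pivotResidual := funext hB
  refine ⟨hsymm.sum_diag_mul_trace_pivotResidual fun i => hA.diag_pos.ne', ?_⟩
  simpa using hsymm.one_sub_div_mul_trace_le hA.posSemidef.trace_nonneg

/-- **Expected trace under adaptive random pivoting (β = 1).**
For symmetric positive definite `A`, the expected trace of the residual satisfies
`∑ i (A i i / tr A) tr (B i) = (1 - tr(A²)/tr(A)²) tr A ≤ (1 - 1/n) tr A`. -/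
theorem expected_trace_adaptive_pivoting (n : ℕ) (hn : 1 ≤ n)
    (A : Matrix (Fin n) (Fin n) ℝ) (hA : A.PosDef)
    (B : Fin n → Matrix (Fin n) (Fin n) ℝ)
    (hB : ∀ i, B i = A - (A i i)⁻¹ • Matrix.vecMulVec (A i) (A i)) :
    (∑ i, (A i i / A.trace) * (B i).trace
        = (1 - (A ^ 2).trace / A.trace ^ 2) * A.trace) ∧
    (1 - (A ^ 2).trace / A.trace ^ 2) * A.trace ≤ (1 - 1 / (n : ℝ)) * A.trace :=
  expected_trace_adaptive_pivoting_general n A hA B hB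
end
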